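/- Let {Yₙ}_{n≥0} be a matrix supermartingale adapted to a filtration {Fₙ} that is almost surely positive semidefinite at every time n, and let A be a d×d symmetric positive definite matrix. Then the time-uniform matrix Ville inequality holds: P( ∃ n ≥ 0 : Yₙ ⋠ A ) ≤ tr( E[Y₀] · A⁻¹ ). -/

import Mathlib

open MeasureTheory ProbabilityTheory Matrix Filter

noncomputable section

/-- Measurable space structure on matrices (entrywise). -/
instance matMS (d : ℕ) : MeasurableSpace (Matrix (Fin d) (Fin d) ℝ) :=
  inferInstanceAs (MeasurableSpace (Fin d → Fin d → ℝ))

/-- Loewner order: `A ⪯ B` iff `B - A` is positive semidefinite. -/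
def LoewnerLE {d : ℕ} (A B : Matrix (Fin d) (Fin d) ℝ) : Prop := (B - A).PosSemidef

/-- Entrywise expectation of a random matrix. -/
def matExpect {Ω : Type*} {_ : MeasurableSpace Ω} {d : ℕ} (μ : Measure Ω)
    (X : Ω → Matrix (Fin d) (Fin d) ℝ) : Matrix (Fin d) (Fin d) ℝ :=
  Matrix.of fun i j => ∫ ω, X ω i j ∂μ

/-- Entrywise conditional expectation of a random matrix. -/
def matCondExp {Ω : Type*} {m0 : MeasurableSpace Ω} {d : ℕ} (μ : Measure Ω)
    (m : MeasurableSpace Ω) (X : Ω → Matrix (Fin d) (Fin d) ℝ) : Ω → Matrix (Fin d) (Fin d) ℝ :=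
  fun ω => Matrix.of fun i j => (μ[fun ω' => X ω' i j | m]) ω

/-- Spectral functional calculus for real symmetric matrices: apply `f` to the eigenvalues. -/
def matCFC {d : ℕ} (f : ℝ → ℝ) (X : Matrix (Fin d) (Fin d) ℝ) : Matrix (Fin d) (Fin d) ℝ :=
  if hX : X.IsHermitian then
    (hX.eigenvectorUnitary : Matrix (Fin d) (Fin d) ℝ) *
      Matrix.diagonal (fun i => f (hX.eigenvalues i)) *
      star (hX.eigenvectorUnitary : Matrix (Fin d) (Fin d) ℝ)
  else 0

/-- Positive semidefinite square root (via the spectral calculus). -/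
def matSqrt {d : ℕ} (X : Matrix (Fin d) (Fin d) ℝ) : Matrix (Fin d) (Fin d) ℝ :=
  matCFC Real.sqrt X

/-- Matrix absolute value of a symmetric matrix. -/
def matAbs {d : ℕ} (X : Matrix (Fin d) (Fin d) ℝ) : Matrix (Fin d) (Fin d) ℝ :=
  matCFC (fun x => |x|) X

/-- Real power of a symmetric (positive (semi)definite) matrix. -/
def matRPow {d : ℕ} (p : ℝ) (X : Matrix (Fin d) (Fin d) ℝ) : Matrix (Fin d) (Fin d) ℝ :=
  matCFC (fun x => x ^ p) X

/-- Matrix logarithm of a positive definite matrix. -/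
def matLog {d : ℕ} (X : Matrix (Fin d) (Fin d) ℝ) : Matrix (Fin d) (Fin d) ℝ :=
  matCFC Real.log X

/-- Matrix exponential. -/
def matExpMat {d : ℕ} (X : Matrix (Fin d) (Fin d) ℝ) : Matrix (Fin d) (Fin d) ℝ :=
  NormedSpace.exp X

/-- Largest eigenvalue of a symmetric matrix. -/
def lamMax {d : ℕ} (X : Matrix (Fin d) (Fin d) ℝ) : ℝ :=
  if hX : X.IsHermitian then ⨆ i, hX.eigenvalues i else 0

/-- Operator (spectral) norm: the largest absolute value of an eigenvalue. -/
def specNorm {d : ℕ} (X : Matrix (Fin d) (Fin d) ℝ) : ℝ :=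
  if hX : X.IsHermitian then ⨆ i, |hX.eigenvalues i| else 0

/-- A random positive semidefinite matrix `U` is trace super-uniform if
`P(U ⋡ Y) ≤ tr Y` for every positive semidefinite `Y`. -/
def TraceSuperUniform {Ω : Type*} {_ : MeasurableSpace Ω} {d : ℕ} (μ : Measure Ω)
    (U : Ω → Matrix (Fin d) (Fin d) ℝ) : Prop :=
  ∀ Y : Matrix (Fin d) (Fin d) ℝ, Y.PosSemidef →
    μ {ω | ¬ LoewnerLE Y (U ω)} ≤ ENNReal.ofReal Y.trace

/-- Matrix supermartingale: adapted, symmetric, entrywise integrable, and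
`E(Y (n+1) | ℱ n) ⪯ Y n` a.s. for every `n`. -/
def IsMatrixSupermartingale {Ω : Type*} {m0 : MeasurableSpace Ω} {d : ℕ}
    (ℱ : Filtration ℕ m0) (μ : Measure Ω) (Y : ℕ → Ω → Matrix (Fin d) (Fin d) ℝ) : Prop :=
  (∀ n ω, (Y n ω).IsHermitian) ∧
  (∀ n i j, StronglyMeasurable[ℱ n] fun ω => Y n ω i j) ∧
  (∀ n i j, Integrable (fun ω => Y n ω i j) μ) ∧
  (∀ n, ∀ᵐ ω ∂μ, LoewnerLE (matCondExp μ (ℱ n) (Y (n + 1)) ω) (Y n ω))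

/-- Matrix submartingale: adapted, symmetric, entrywise integrable, and
`E(Y (n+1) | ℱ n) ⪰ Y n` a.s. for every `n`. -/
def IsMatrixSubmartingale {Ω : Type*} {m0 : MeasurableSpace Ω} {d : ℕ}
    (ℱ : Filtration ℕ m0) (μ : Measure Ω) (Y : ℕ → Ω → Matrix (Fin d) (Fin d) ℝ) : Prop :=
  (∀ n ω, (Y n ω).IsHermitian) ∧
  (∀ n i j, StronglyMeasurable[ℱ n] fun ω => Y n ω i j) ∧
  (∀ n i j, Integrable (fun ω => Y n ω i j) μ) ∧
  (∀ n, ∀ᵐ ω ∂μ, LoewnerLE (Y n ω) (matCondExp μ (ℱ n) (Y (n + 1)) ω))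

/-- Exchangeability of a sequence of random matrices: any finitely supported permutation
of the indices leaves the joint law invariant. -/
def MatExchangeable {Ω : Type*} {_ : MeasurableSpace Ω} {d : ℕ} (μ : Measure Ω)
    (X : ℕ → Ω → Matrix (Fin d) (Fin d) ℝ) : Prop :=
  ∀ σ : Equiv.Perm ℕ, {n | σ n ≠ n}.Finite →
    Measure.map (fun ω n => X (σ n) ω) μ = Measure.map (fun ω n => X n ω) μ

/-!
Tracing against `A⁻¹` turns `Y` into the nonnegative real supermartingale `tr (Yₙ A⁻¹)`, to which
the scalar Ville inequality applies at level `1`. It remains to see that `Yₙ ⋠ A` forces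
`tr (Yₙ A⁻¹) > 1`: conjugating by `A^{-1/2}` reduces this to `A = 1`, where it holds because a
positive semidefinite matrix is dominated by its trace times the identity.
-/

open scoped MatrixOrder ComplexOrder

namespace Matrix

theorem trace_mul_eq_sum {m n R : Type*} [Fintype m] [Fintype n]
    [NonUnitalNonAssocCommSemiring R] (M : Matrix m n R) (C : Matrix n m R) :
    (M * C).trace = ∑ p : m × n, C p.2 p.1 * M p.1 p.2 := by
  simp only [trace, diag, mul_apply, Fintype.sum_prod_type]
  exact Finset.sum_congr rfl fun i _ => Finset.sum_congr rfl fun j _ => mul_comm _ _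

variable {n 𝕜 : Type*} [Fintype n] [DecidableEq n] [RCLike 𝕜]

theorem PosSemidef.trace_mul_nonneg {M N : Matrix n n 𝕜} (hM : M.PosSemidef)
    (hN : N.PosSemidef) : 0 ≤ (M * N).trace := by
  have hS : IsSelfAdjoint (CFC.sqrt N) := (CFC.sqrt_nonneg N).isSelfAdjoint
  have hconj : (CFC.sqrt N * M * CFC.sqrt N).PosSemidef :=
    (hS.conjugate_nonneg hM.nonneg).posSemidef
  rw [← CFC.sqrt_mul_sqrt_self N hN.nonneg, ← mul_assoc, trace_mul_cycle]
  exact hconj.trace_nonneg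

theorem PosSemidef.le_trace_smul_one {M : Matrix n n ℝ} (hM : M.PosSemidef) :
    M ≤ M.trace • 1 := by
  rw [← Algebra.algebraMap_eq_smul_one]
  refine le_algebraMap_of_spectrum_le fun x hx => ?_
  rw [hM.isHermitian.spectrum_real_eq_range_eigenvalues] at hx
  obtain ⟨i, rfl⟩ := hx
  rw [hM.isHermitian.trace_eq_sum_eigenvalues]
  exact Finset.single_le_sum (fun j _ => hM.eigenvalues_nonneg j) (Finset.mem_univ i)

theorem PosDef.le_of_trace_mul_inv_le_one {A Y : Matrix n n ℝ} (hA : A.PosDef)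
    (hY : Y.PosSemidef) (h : (Y * A⁻¹).trace ≤ 1) : Y ≤ A := by
  set R := CFC.sqrt A
  have hRR : R * R = A := CFC.sqrt_mul_sqrt_self A hA.posSemidef.nonneg
  have hR : IsSelfAdjoint R := (CFC.sqrt_nonneg A).isSelfAdjoint
  have hR_det : IsUnit R.det :=
    (isUnit_iff_isUnit_det R).1 ((CFC.isUnit_sqrt_iff A hA.posSemidef.nonneg).2 hA.isUnit)
  have hR_inv : R⁻¹ * R⁻¹ = A⁻¹ := by rw [← mul_inv_rev, hRR]
  set M := R⁻¹ * Y * R⁻¹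
  have hM : M.PosSemidef :=
    (IsSelfAdjoint.conjugate_nonneg hY.nonneg (IsHermitian.inv hR)).posSemidef
  have hM_le_one : M ≤ 1 := calc
    M ≤ M.trace • 1 := hM.le_trace_smul_one
    _ = (Y * A⁻¹).trace • 1 := by rw [trace_mul_cycle, hR_inv, trace_mul_comm]
    _ ≤ 1 := by
      have h1 := PosSemidef.one (n := n) (R := ℝ) |>.smul (sub_nonneg.2 h)
      rwa [sub_smul, one_smul] at h1
  have hY_eq : R * M * R = Y := by
    simp only [M, ← mul_assoc, mul_nonsing_inv R hR_det, one_mul]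
    rw [mul_assoc, nonsing_inv_mul R hR_det, mul_one]
  calc Y = R * M * R := hY_eq.symm
    _ ≤ R * 1 * R := hR.conjugate_le_conjugate hM_le_one
    _ = A := by rw [mul_one, hRR]

end Matrix

namespace MeasureTheory

variable {Ω : Type*} {m0 : MeasurableSpace Ω} {μ : Measure Ω} [IsFiniteMeasure μ]
  {𝒢 : Filtration ℕ m0} {f : ℕ → Ω → ℝ}

theorem Supermartingale.integral_stoppedValue_le_integral_zero (hf : Supermartingale f 𝒢 μ)
    {τ : Ω → ℕ∞} (hτ : IsStoppingTime 𝒢 τ) {N : ℕ} (hbdd : ∀ ω, τ ω ≤ N) :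
    μ[stoppedValue f τ] ≤ μ[f 0] := by
  have h := hf.neg.expected_stoppedValue_mono (isStoppingTime_const 𝒢 0) hτ
    (fun ω => bot_le) hbdd
  rw [show stoppedValue (-f) τ = -stoppedValue f τ from rfl, stoppedValue_const] at h
  simpa only [Pi.neg_apply, integral_neg, neg_le_neg_iff] using h

theorem Supermartingale.mul_measureReal_exists_le_ge_le_integral (hf : Supermartingale f 𝒢 μ)
    (hnonneg : ∀ n, 0 ≤ᵐ[μ] f n) {ε : ℝ} (hε : 0 ≤ ε) (n : ℕ) :
    ε * μ.real {ω | ∃ k ≤ n, ε ≤ f k ω} ≤ μ[f 0] := by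
  set τ : Ω → ℕ∞ := fun ω => (hittingBtwn f (Set.Ici ε) 0 n ω : ℕ)
  have hτ : IsStoppingTime 𝒢 τ :=
    hf.stronglyAdapted.adapted.isStoppingTime_hittingBtwn measurableSet_Ici
  have hτ_le : ∀ ω, τ ω ≤ n := fun ω => WithTop.coe_le_coe.2 (hittingBtwn_le ω)
  set g := stoppedValue f τ
  have hg_int : Integrable g μ := integrable_stoppedValue ℕ hτ hf.integrable hτ_le
  have hg_nonneg : 0 ≤ᵐ[μ] g := by
    filter_upwards [ae_all_iff.2 hnonneg] with ω hω using hω _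
  have hsub : {ω | ∃ k ≤ n, ε ≤ f k ω} ⊆ {ω | ε ≤ g ω} := by
    rintro ω ⟨k, hk, hfk⟩
    exact stoppedValue_hittingBtwn_mem ⟨k, ⟨Nat.zero_le _, hk⟩, hfk⟩
  calc ε * μ.real {ω | ∃ k ≤ n, ε ≤ f k ω} ≤ ε * μ.real {ω | ε ≤ g ω} :=
        mul_le_mul_of_nonneg_left (measureReal_mono hsub) hε
    _ ≤ μ[g] := mul_meas_ge_le_integral_of_nonneg hg_nonneg hg_int ε
    _ ≤ μ[f 0] := hf.integral_stoppedValue_le_integral_zero hτ hτ_le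

theorem Supermartingale.measure_exists_ge_le_integral_div (hf : Supermartingale f 𝒢 μ)
    (hnonneg : ∀ n, 0 ≤ᵐ[μ] f n) {ε : ℝ} (hε : 0 < ε) :
    μ {ω | ∃ n, ε ≤ f n ω} ≤ ENNReal.ofReal (μ[f 0] / ε) := by
  have hunion : {ω | ∃ n, ε ≤ f n ω} = ⋃ n, {ω | ∃ k ≤ n, ε ≤ f k ω} := by
    ext ω
    simp only [Set.mem_ofPred_eq, Set.mem_iUnion]
    exact ⟨fun ⟨n, hn⟩ => ⟨n, n, le_rfl, hn⟩, fun ⟨_, k, _, hk⟩ => ⟨k, hk⟩⟩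
  have hmono : Monotone fun n => {ω | ∃ k ≤ n, ε ≤ f k ω} :=
    fun a b hab ω ⟨k, hk, h⟩ => ⟨k, hk.trans hab, h⟩
  rw [hunion, hmono.measure_iUnion]
  refine iSup_le fun n => ?_
  rw [← ofReal_measureReal (measure_ne_top μ _)]
  exact ENNReal.ofReal_le_ofReal <|
    (le_div_iff₀' hε).2 (hf.mul_measureReal_exists_le_ge_le_integral hnonneg hε.le n)

end MeasureTheory

section RandomMatrix

variable {Ω : Type*} {m0 : MeasurableSpace Ω} {μ : Measure Ω} {d : ℕ}
  {X : Ω → Matrix (Fin d) (Fin d) ℝ}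

theorem integrable_trace_mul (hX : ∀ i j, Integrable (fun ω => X ω i j) μ)
    (C : Matrix (Fin d) (Fin d) ℝ) : Integrable (fun ω => (X ω * C).trace) μ := by
  simp only [trace_mul_eq_sum]
  exact integrable_finsetSum _ fun p _ => (hX p.1 p.2).const_mul _

theorem integral_trace_mul (hX : ∀ i j, Integrable (fun ω => X ω i j) μ)
    (C : Matrix (Fin d) (Fin d) ℝ) :
    ∫ ω, (X ω * C).trace ∂μ = (matExpect μ X * C).trace := by
  simp only [trace_mul_eq_sum]
  rw [integral_finsetSum _ fun p _ => (hX p.1 p.2).const_mul _]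
  simp only [integral_const_mul, matExpect, of_apply]

theorem condExp_trace_mul (m : MeasurableSpace Ω)
    (hX : ∀ i j, Integrable (fun ω => X ω i j) μ) (C : Matrix (Fin d) (Fin d) ℝ) :
    μ[fun ω => (X ω * C).trace | m] =ᵐ[μ] fun ω => (matCondExp μ m X ω * C).trace := by
  have hsum : (fun ω => (X ω * C).trace) =
      ∑ p : Fin d × Fin d, C p.2 p.1 • fun ω => X ω p.1 p.2 := by
    ext ω
    simp only [trace_mul_eq_sum, Finset.sum_apply, Pi.smul_apply, smul_eq_mul]
  rw [hsum]
  filter_upwards [condExp_finsetSum (s := Finset.univ)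
      (fun (p : Fin d × Fin d) _ => (hX p.1 p.2).smul (C p.2 p.1)) m,
    ae_all_iff.2 fun p : Fin d × Fin d =>
      condExp_smul (μ := μ) (C p.2 p.1) (fun ω => X ω p.1 p.2) m]
    with ω hsum_ce hsmul_ce
  simp only [hsum_ce, Finset.sum_apply, hsmul_ce, trace_mul_eq_sum, Pi.smul_apply, smul_eq_mul,
    matCondExp, of_apply]

end RandomMatrix

theorem IsMatrixSupermartingale.supermartingale_trace_mul {Ω : Type*} {m0 : MeasurableSpace Ω}
    {μ : Measure Ω} [IsFiniteMeasure μ] {d : ℕ} {ℱ : Filtration ℕ m0}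
    {Y : ℕ → Ω → Matrix (Fin d) (Fin d) ℝ} (hY : IsMatrixSupermartingale ℱ μ Y)
    {C : Matrix (Fin d) (Fin d) ℝ} (hC : C.PosSemidef) :
    Supermartingale (fun n ω => (Y n ω * C).trace) ℱ μ := by
  obtain ⟨-, hmeas, hint, hsuper⟩ := hY
  have hadapted : StronglyAdapted ℱ fun n ω => (Y n ω * C).trace := fun n => by
    simp only [trace_mul_eq_sum]
    exact Finset.stronglyMeasurable_fun_sum _ fun p _ => (hmeas n p.1 p.2).const_mul _
  refine supermartingale_nat hadapted (fun n => integrable_trace_mul (hint n) C) fun n => ?_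
  filter_upwards [condExp_trace_mul (ℱ n) (hint (n + 1)) C, hsuper n] with ω hce hle
  have h := hle.trace_mul_nonneg hC
  rw [sub_mul, trace_sub, sub_nonneg] at h
  rwa [hce]

/-- **Matrix Ville's inequality (time-uniform form).**
For an a.s. positive semidefinite matrix supermartingale `Y` and `A ≻ 0`:
`P( ∃ n, Yₙ ⋠ A ) ≤ tr( E[Y₀] A⁻¹ )`. -/
theorem stmt11 {Ω : Type*} {m0 : MeasurableSpace Ω} (μ : Measure Ω) [IsProbabilityMeasure μ]
    {d : ℕ} (ℱ : Filtration ℕ m0)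
    (Y : ℕ → Ω → Matrix (Fin d) (Fin d) ℝ)
    (hY : IsMatrixSupermartingale ℱ μ Y)
    (hpos : ∀ n, ∀ᵐ ω ∂μ, (Y n ω).PosSemidef)
    (A : Matrix (Fin d) (Fin d) ℝ) (hA : A.PosDef) :
    μ {ω | ∃ n, ¬ LoewnerLE (Y n ω) A} ≤
      ENNReal.ofReal ((matExpect μ (Y 0) * A⁻¹).trace) := by
  have hA_inv : A⁻¹.PosSemidef := hA.inv.posSemidef
  set f : ℕ → Ω → ℝ := fun n ω => (Y n ω * A⁻¹).trace
  have hf : Supermartingale f ℱ μ := hY.supermartingale_trace_mul hA_inv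
  have hf_nonneg : ∀ n, 0 ≤ᵐ[μ] f n := fun n => by
    filter_upwards [hpos n] with ω hω using hω.trace_mul_nonneg hA_inv
  have hsub : {ω | ∃ n, ¬ LoewnerLE (Y n ω) A} ≤ᵐ[μ] {ω | ∃ n, 1 ≤ f n ω} := by
    filter_upwards [ae_all_iff.2 hpos] with ω hω ⟨n, hn⟩
    exact ⟨n, (not_le.1 (mt (hA.le_of_trace_mul_inv_le_one (hω n)) hn)).le⟩
  calc μ {ω | ∃ n, ¬ LoewnerLE (Y n ω) A}
      ≤ μ {ω | ∃ n, 1 ≤ f n ω} := measure_mono_ae hsub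
    _ ≤ ENNReal.ofReal (μ[f 0] / 1) := hf.measure_exists_ge_le_integral_div hf_nonneg one_pos
    _ = _ := by rw [div_one, integral_trace_mul (hY.2.2.1 0)]

end
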